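/- Let $f(x) = \tfrac12 x^\top H x - c^\top x$ with $H$ symmetric positive definite, $x^\star = H^{-1}c$. Let $\mathcal{P}$ be a random partition of $[n]$ into $K$ blocks, $H_\mathcal{P}$ its induced block-diagonal restriction of $H$ (assumed invertible almost surely), and consider one step $x_{+} = x - \tfrac1K H_\mathcal{P}^{-1}\nabla f(x)$. If $\rho := \tfrac1K \lambda_{\min}\big(\mathbb{E}[H_\mathcal{P}^{-1}] H\big)$, then $\mathbb{E}[f(x_+)] - f(x^\star) \leq (1-\rho)\big(f(x) - f(x^\star)\big)$, and consequently after $t$ steps $\mathbb{E}[f(x_t)] - f(x^\star) \leq (1-\rho)^t (f(x_0) - f(x^\star))$. -/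

import Mathlib

/-!
Write `e = x - x⋆`, so that `f x - f⋆ = ½ eᵀHe` and `∇f(x) = He =: g`. Splitting `x` into its
restrictions to the `K` blocks, convexity of the quadratic form gives `H ≤ K H_P`; hence, with
`d = H_P⁻¹ g`, expanding `(e - d/K)ᵀH(e - d/K)` gives `2 (f(x₊) - f⋆) ≤ eᵀHe - K⁻¹ gᵀH_P⁻¹g`.
Averaging over `P` replaces `H_P⁻¹` by `E = 𝔼[H_P⁻¹]`. Factoring `H = BᵀB`, we have `eᵀHe = |Be|²`
and `gᵀEg = (Be)ᵀ(BEBᵀ)(Be)`, where the symmetric matrix `BEBᵀ` has the characteristic polynomial of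
`EH = (EBᵀ)B`; so `gᵀEg ≥ λ_min(EH) eᵀHe`. The `t`-step bound follows by conditioning on the first
partition.
-/

open Matrix

/-- Block-diagonal restriction of a matrix induced by a block assignment `π`. -/
def maskMat {n K : ℕ} (M : Matrix (Fin n) (Fin n) ℝ) (π : Fin n → Fin K) :
    Matrix (Fin n) (Fin n) ℝ :=
  Matrix.of fun i j => if π i = π j then M i j else 0

/-- The smallest (real) eigenvalue of a matrix. -/
noncomputable def lambdaMin {n : ℕ} (M : Matrix (Fin n) (Fin n) ℝ) : ℝ :=
  sInf {μ : ℝ | Module.End.HasEigenvalue (Matrix.toLin' M) μ}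

/-- One step of block-diagonally preconditioned gradient descent for the quadratic
`f(x) = ½ xᵀHx - cᵀx`, with step size `1/K` and partition `π`. -/
noncomputable def quadStep {n K : ℕ} (H : Matrix (Fin n) (Fin n) ℝ) (c : Fin n → ℝ)
    (π : Fin n → Fin K) (x : Fin n → ℝ) : Fin n → ℝ :=
  x - ((K : ℝ)⁻¹) • ((maskMat H π)⁻¹ *ᵥ (H *ᵥ x - c))

namespace Matrix

variable {n : Type*} [Fintype n]

theorem IsHermitian.dotProduct_mulVec_comm {A : Matrix n n ℝ} (hA : A.IsHermitian)
    (x y : n → ℝ) : x ⬝ᵥ A *ᵥ y = y ⬝ᵥ A *ᵥ x := by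
  have hAt : Aᵀ = A := by rw [← conjTranspose_eq_transpose_of_trivial, hA.eq]
  rw [dotProduct_mulVec, ← mulVec_transpose, hAt, dotProduct_comm]

theorem PosSemidef.dotProduct_mulVec_self_nonneg {A : Matrix n n ℝ} (hA : A.PosSemidef)
    (x : n → ℝ) : 0 ≤ x ⬝ᵥ A *ᵥ x := by
  simpa using hA.dotProduct_mulVec_nonneg x

theorem PosSemidef.dotProduct_mulVec_sum_le {ι : Type*} {A : Matrix n n ℝ} (hA : A.PosSemidef)
    (s : Finset ι) (u : ι → n → ℝ) :
    (∑ k ∈ s, u k) ⬝ᵥ A *ᵥ (∑ k ∈ s, u k) ≤ s.card * ∑ k ∈ s, u k ⬝ᵥ A *ᵥ u k := by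
  set q : ι → ℝ := fun k => u k ⬝ᵥ A *ᵥ u k
  have hcross : ∀ k l, u k ⬝ᵥ A *ᵥ u l ≤ (q k + q l) / 2 := fun k l => by
    have h := hA.dotProduct_mulVec_self_nonneg (u k - u l)
    simp only [mulVec_sub, dotProduct_sub, sub_dotProduct,
      hA.isHermitian.dotProduct_mulVec_comm (u l) (u k)] at h
    linarith
  calc (∑ k ∈ s, u k) ⬝ᵥ A *ᵥ (∑ k ∈ s, u k)
      = ∑ k ∈ s, ∑ l ∈ s, u k ⬝ᵥ A *ᵥ u l := by
        simp only [mulVec_sum, sum_dotProduct, dotProduct_sum]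
        exact Finset.sum_comm
    _ ≤ ∑ k ∈ s, ∑ l ∈ s, (q k + q l) / 2 := by gcongr with k _ l _; exact hcross k l
    _ = s.card * ∑ k ∈ s, q k := by
        simp only [add_div, Finset.sum_add_distrib, Finset.sum_const, nsmul_eq_mul,
          ← Finset.sum_div, ← Finset.mul_sum]
        ring

theorem quadratic_sub_eq_of_mulVec_eq {A : Matrix n n ℝ} (hA : A.IsHermitian) {c x₀ : n → ℝ}
    (hx₀ : A *ᵥ x₀ = c) (y : n → ℝ) :
    (1 / 2 * (y ⬝ᵥ A *ᵥ y) - c ⬝ᵥ y) - (1 / 2 * (x₀ ⬝ᵥ A *ᵥ x₀) - c ⬝ᵥ x₀)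
      = 1 / 2 * ((y - x₀) ⬝ᵥ A *ᵥ (y - x₀)) := by
  have hyx : x₀ ⬝ᵥ A *ᵥ y = y ⬝ᵥ A *ᵥ x₀ := hA.dotProduct_mulVec_comm x₀ y
  simp only [mulVec_sub, dotProduct_sub, sub_dotProduct, hyx, hx₀, dotProduct_comm c]
  ring

theorem dotProduct_mulVec_sub_smul_inv_le [DecidableEq n] {H A : Matrix n n ℝ}
    (hH : H.IsHermitian) (hA : IsUnit A.det) {κ : ℝ}
    (hHA : ∀ x, x ⬝ᵥ H *ᵥ x ≤ κ * (x ⬝ᵥ A *ᵥ x)) (e : n → ℝ) :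
    (e - κ⁻¹ • (A⁻¹ *ᵥ (H *ᵥ e))) ⬝ᵥ H *ᵥ (e - κ⁻¹ • (A⁻¹ *ᵥ (H *ᵥ e)))
      ≤ e ⬝ᵥ H *ᵥ e - κ⁻¹ * ((H *ᵥ e) ⬝ᵥ A⁻¹ *ᵥ (H *ᵥ e)) := by
  set g := H *ᵥ e
  set d := A⁻¹ *ᵥ g
  have hdA : d ⬝ᵥ A *ᵥ d = g ⬝ᵥ d := by
    rw [mulVec_mulVec, mul_nonsing_inv _ hA, one_mulVec, dotProduct_comm]
  have hdH : d ⬝ᵥ H *ᵥ e = g ⬝ᵥ d := dotProduct_comm _ _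
  have hexpand : (e - κ⁻¹ • d) ⬝ᵥ H *ᵥ (e - κ⁻¹ • d)
      = e ⬝ᵥ H *ᵥ e - 2 * κ⁻¹ * (g ⬝ᵥ d) + κ⁻¹ ^ 2 * (d ⬝ᵥ H *ᵥ d) := by
    simp only [mulVec_sub, mulVec_smul, dotProduct_sub, sub_dotProduct, dotProduct_smul,
      smul_dotProduct, smul_eq_mul, hH.dotProduct_mulVec_comm e d, hdH]
    ring
  have hκ : κ⁻¹ ^ 2 * (d ⬝ᵥ H *ᵥ d) ≤ κ⁻¹ * (g ⬝ᵥ d) :=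
    calc κ⁻¹ ^ 2 * (d ⬝ᵥ H *ᵥ d) ≤ κ⁻¹ ^ 2 * (κ * (g ⬝ᵥ d)) := by
          gcongr; exact hdA ▸ hHA d
      _ = κ⁻¹ * (g ⬝ᵥ d) := by
          rcases eq_or_ne κ 0 with rfl | hκ
          · simp
          · field_simp
  rw [hexpand]
  linarith

end Matrix

section BlockRestriction

variable {n K : ℕ}

def blockPart (π : Fin n → Fin K) (k : Fin K) (x : Fin n → ℝ) : Fin n → ℝ :=
  fun i => if π i = k then x i else 0

theorem sum_blockPart (π : Fin n → Fin K) (x : Fin n → ℝ) : ∑ k, blockPart π k x = x := by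
  funext i
  simp [blockPart, Finset.sum_apply]

theorem dotProduct_maskMat_mulVec (H : Matrix (Fin n) (Fin n) ℝ) (π : Fin n → Fin K)
    (x : Fin n → ℝ) :
    x ⬝ᵥ maskMat H π *ᵥ x = ∑ k, blockPart π k x ⬝ᵥ H *ᵥ blockPart π k x := by
  simp only [dotProduct, mulVec, maskMat, blockPart, of_apply, Finset.mul_sum]
  rw [Finset.sum_comm (f := fun k i => ∑ j, _)]
  refine Finset.sum_congr rfl fun i _ => ?_
  rw [Finset.sum_comm]
  refine Finset.sum_congr rfl fun j _ => ?_
  by_cases hij : π i = π j <;> simp [hij, eq_comm]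

theorem isHermitian_maskMat {H : Matrix (Fin n) (Fin n) ℝ} (hH : H.IsHermitian)
    (π : Fin n → Fin K) : (maskMat H π).IsHermitian := by
  ext i j
  simp only [conjTranspose_apply, star_trivial, maskMat, of_apply, eq_comm (a := π j)]
  rw [← hH.apply i j, star_trivial]

theorem Matrix.PosDef.maskMat {H : Matrix (Fin n) (Fin n) ℝ} (hH : H.PosDef)
    (π : Fin n → Fin K) : (maskMat H π).PosDef := by
  refine PosDef.of_dotProduct_mulVec_pos (isHermitian_maskMat hH.isHermitian π) fun x hx => ?_
  obtain ⟨i, hi⟩ := Function.ne_iff.mp hx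
  have hblock : blockPart π (π i) x ≠ 0 := fun h => hi (by simpa [blockPart] using congrFun h i)
  rw [star_trivial, dotProduct_maskMat_mulVec]
  exact Finset.sum_pos' (fun k _ => hH.posSemidef.dotProduct_mulVec_self_nonneg _)
    ⟨π i, Finset.mem_univ _, by simpa using hH.dotProduct_mulVec_pos hblock⟩

theorem Matrix.PosSemidef.dotProduct_mulVec_le_mul_maskMat {H : Matrix (Fin n) (Fin n) ℝ}
    (hH : H.PosSemidef) (π : Fin n → Fin K) (x : Fin n → ℝ) :
    x ⬝ᵥ H *ᵥ x ≤ K * (x ⬝ᵥ maskMat H π *ᵥ x) := by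
  simpa [sum_blockPart, dotProduct_maskMat_mulVec] using
    hH.dotProduct_mulVec_sum_le Finset.univ (fun k => blockPart π k x)

end BlockRestriction

section LambdaMin

variable {n : ℕ}

theorem lambdaMin_eq_sInf_spectrum (M : Matrix (Fin n) (Fin n) ℝ) :
    lambdaMin M = sInf (spectrum ℝ M) := by
  simp only [lambdaMin, Module.End.hasEigenvalue_iff_mem_spectrum, spectrum_toLin']
  rfl

theorem lambdaMin_mul_comm (A B : Matrix (Fin n) (Fin n) ℝ) :
    lambdaMin (A * B) = lambdaMin (B * A) := by
  have hspec : spectrum ℝ (A * B) = spectrum ℝ (B * A) := Set.ext fun μ => by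
    simp only [mem_spectrum_iff_isRoot_charpoly, charpoly_mul_comm A B]
  rw [lambdaMin_eq_sInf_spectrum, lambdaMin_eq_sInf_spectrum, hspec]

theorem Matrix.IsHermitian.lambdaMin_mul_dotProduct_self_le {S : Matrix (Fin n) (Fin n) ℝ}
    (hS : S.IsHermitian) (v : Fin n → ℝ) : lambdaMin S * (v ⬝ᵥ v) ≤ v ⬝ᵥ S *ᵥ v := by
  have hpsd : (S - lambdaMin S • 1).PosSemidef := by
    refine posSemidef_iff_isHermitian_and_spectrum_nonneg.mpr
      ⟨hS.sub (isHermitian_one.smul (.all _)), ?_⟩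
    rw [← Algebra.algebraMap_eq_smul_one, ← spectrum.sub_singleton_eq]
    rintro _ ⟨μ, hμ, _, rfl, rfl⟩
    rw [lambdaMin_eq_sInf_spectrum]
    exact sub_nonneg.mpr (csInf_le S.finite_real_spectrum.bddBelow hμ)
  have := hpsd.dotProduct_mulVec_self_nonneg v
  rwa [sub_mulVec, smul_mulVec, one_mulVec, dotProduct_sub, dotProduct_smul, smul_eq_mul,
    sub_nonneg] at this

open scoped MatrixOrder in
theorem lambdaMin_mul_mul_dotProduct_le {E H : Matrix (Fin n) (Fin n) ℝ} (hE : E.IsHermitian)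
    (hH : H.PosSemidef) (e : Fin n → ℝ) :
    lambdaMin (E * H) * (e ⬝ᵥ H *ᵥ e) ≤ (H *ᵥ e) ⬝ᵥ E *ᵥ (H *ᵥ e) := by
  obtain ⟨B, rfl⟩ := CStarAlgebra.nonneg_iff_eq_star_mul_self.mp hH.nonneg
  have hspec : lambdaMin (E * (Bᴴ * B)) = lambdaMin (B * E * Bᴴ) := by
    rw [← Matrix.mul_assoc, lambdaMin_mul_comm, Matrix.mul_assoc]
  have hadj : ∀ (A : Matrix (Fin n) (Fin n) ℝ) u v, u ⬝ᵥ A *ᵥ v = (Aᵀ *ᵥ u) ⬝ᵥ v :=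
    fun A u v => by rw [dotProduct_mulVec, mulVec_transpose]
  have hquad : e ⬝ᵥ (Bᴴ * B) *ᵥ e = (B *ᵥ e) ⬝ᵥ (B *ᵥ e) := by
    rw [← mulVec_mulVec, hadj, conjTranspose_eq_transpose_of_trivial, transpose_transpose]
  have hgrad : ((Bᴴ * B) *ᵥ e) ⬝ᵥ E *ᵥ ((Bᴴ * B) *ᵥ e)
      = (B *ᵥ e) ⬝ᵥ (B * E * Bᴴ) *ᵥ (B *ᵥ e) := by
    simp only [← mulVec_mulVec]
    rw [hadj B, conjTranspose_eq_transpose_of_trivial]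
  rw [star_eq_conjTranspose, hspec, hquad, hgrad]
  exact (isHermitian_mul_mul_conjTranspose B hE).lambdaMin_mul_dotProduct_self_le (B *ᵥ e)

end LambdaMin

section RandomIteration

variable {ι X : Type*} [Fintype ι]

theorem sum_mul_sub_of_sum_eq_one {w : ι → ℝ} (hw : ∑ i, w i = 1) (a : ι → ℝ) (b : ℝ) :
    (∑ i, w i * a i) - b = ∑ i, w i * (a i - b) := by
  simp only [mul_sub, Finset.sum_sub_distrib, ← Finset.sum_mul, hw, one_mul]

theorem sum_prod_mul_foldl_succ {R : Type*} [CommSemiring R] (w : ι → R) (F : X → R)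
    (T : X → ι → X) (t : ℕ) (x₀ : X) :
    ∑ p : Fin (t + 1) → ι, (∏ k, w (p k)) * F ((List.ofFn p).foldl T x₀)
      = ∑ i, w i * ∑ q : Fin t → ι, (∏ k, w (q k)) * F ((List.ofFn q).foldl T (T x₀ i)) := by
  rw [← (Fin.consEquiv fun _ => ι).sum_comp, Fintype.sum_prod_type]
  simp [Fin.consEquiv, Fin.prod_univ_succ, List.ofFn_succ, Finset.mul_sum, mul_assoc]

theorem sum_prod_mul_foldl_le_pow {w : ι → ℝ} (hw : ∀ i, 0 ≤ w i) {T : ι → X → X}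
    {h : X → ℝ} (hh : ∀ x, 0 ≤ h x) {r : ℝ} (hT : ∀ x, ∑ i, w i * h (T i x) ≤ r * h x)
    (t : ℕ) (x₀ : X) :
    ∑ p : Fin t → ι, (∏ k, w (p k)) * h ((List.ofFn p).foldl (fun x i => T i x) x₀)
      ≤ r ^ t * h x₀ := by
  rcases lt_or_ge r 0 with hr | hr
  -- a negative factor is only possible when `h` vanishes identically
  · have hzero : ∀ x, h x = 0 := fun x => le_antisymm
      (nonpos_of_mul_nonneg_right ((Finset.sum_nonneg fun i _ =>
        mul_nonneg (hw i) (hh _)).trans (hT x)) hr) (hh x)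
    simp [hzero]
  induction t generalizing x₀ with
  | zero => simp
  | succ t ih =>
    rw [sum_prod_mul_foldl_succ]
    calc ∑ i, w i * ∑ q : Fin t → ι,
          (∏ k, w (q k)) * h ((List.ofFn q).foldl (fun x i => T i x) (T i x₀))
        ≤ ∑ i, w i * (r ^ t * h (T i x₀)) := by gcongr with i; exacts [hw i, ih _]
      _ = r ^ t * ∑ i, w i * h (T i x₀) := by rw [Finset.mul_sum]; simp only [mul_left_comm]
      _ ≤ r ^ t * (r * h x₀) := by gcongr; exact hT x₀
      _ = r ^ (t + 1) * h x₀ := by ring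

end RandomIteration

section PreconditionedStep

variable {n K : ℕ} {H : Matrix (Fin n) (Fin n) ℝ} {c xstar : Fin n → ℝ}

theorem quadStep_sub (hxstar : H *ᵥ xstar = c) (π : Fin n → Fin K) (x : Fin n → ℝ) :
    quadStep H c π x - xstar
      = (x - xstar) - (K : ℝ)⁻¹ • ((maskMat H π)⁻¹ *ᵥ (H *ᵥ (x - xstar))) := by
  rw [quadStep, mulVec_sub H x xstar, hxstar]
  abel

theorem sum_mul_dotProduct_quadStep_sub_le (hH : H.PosDef) (hxstar : H *ᵥ xstar = c)
    {w : (Fin n → Fin K) → ℝ} (hw : ∀ π, 0 ≤ w π) (hwsum : ∑ π, w π = 1) (x : Fin n → ℝ) :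
    ∑ π, w π * ((quadStep H c π x - xstar) ⬝ᵥ H *ᵥ (quadStep H c π x - xstar))
      ≤ (1 - (K : ℝ)⁻¹ * lambdaMin ((∑ π, w π • (maskMat H π)⁻¹) * H))
        * ((x - xstar) ⬝ᵥ H *ᵥ (x - xstar)) := by
  set E := ∑ π, w π • (maskMat H π)⁻¹
  set e := x - xstar
  set g := H *ᵥ e
  have hE : g ⬝ᵥ E *ᵥ g = ∑ π, w π * (g ⬝ᵥ (maskMat H π)⁻¹ *ᵥ g) := by
    simp only [E, sum_mulVec, smul_mulVec, dotProduct_sum, dotProduct_smul, smul_eq_mul]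
  have hEherm : E.IsHermitian := isSelfAdjoint_sum _ fun π _ =>
    (isHermitian_maskMat hH.isHermitian π).inv.smul (.all _)
  calc ∑ π, w π * ((quadStep H c π x - xstar) ⬝ᵥ H *ᵥ (quadStep H c π x - xstar))
      ≤ ∑ π, w π * (e ⬝ᵥ H *ᵥ e - (K : ℝ)⁻¹ * (g ⬝ᵥ (maskMat H π)⁻¹ *ᵥ g)) := by
        refine Finset.sum_le_sum fun π _ => mul_le_mul_of_nonneg_left ?_ (hw π)
        rw [quadStep_sub hxstar]
        exact dotProduct_mulVec_sub_smul_inv_le hH.isHermitian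
          ((isUnit_iff_isUnit_det _).mp (hH.maskMat π).isUnit)
          (hH.posSemidef.dotProduct_mulVec_le_mul_maskMat π) e
    _ = e ⬝ᵥ H *ᵥ e - (K : ℝ)⁻¹ * (g ⬝ᵥ E *ᵥ g) := by
        simp only [hE, mul_sub, Finset.sum_sub_distrib, ← Finset.sum_mul, hwsum, one_mul,
          Finset.mul_sum, mul_left_comm]
    _ ≤ e ⬝ᵥ H *ᵥ e - (K : ℝ)⁻¹ * (lambdaMin (E * H) * (e ⬝ᵥ H *ᵥ e)) := by
        gcongr
        exact lambdaMin_mul_mul_dotProduct_le hEherm hH.posSemidef e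
    _ = _ := by ring

end PreconditionedStep

theorem stmt3_general {n K : ℕ} (H : Matrix (Fin n) (Fin n) ℝ) (hH : H.PosDef)
    (c : Fin n → ℝ) (f : (Fin n → ℝ) → ℝ)
    (hf : ∀ y, f y = 1 / 2 * (y ⬝ᵥ (H *ᵥ y)) - c ⬝ᵥ y)
    (xstar : Fin n → ℝ) (hxstar : xstar = H⁻¹ *ᵥ c)
    -- the distribution of the random partition, as a weight function
    (w : (Fin n → Fin K) → ℝ) (hw : ∀ π, 0 ≤ w π) (hwsum : ∑ π, w π = 1)
    (ρ : ℝ)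
    (hρ : ρ = (K : ℝ)⁻¹ * lambdaMin ((∑ π, w π • (maskMat H π)⁻¹) * H)) :
    (∀ x : Fin n → ℝ,
        (∑ π, w π * f (quadStep H c π x)) - f xstar ≤ (1 - ρ) * (f x - f xstar)) ∧
    (∀ (t : ℕ) (x0 : Fin n → ℝ),
        (∑ p : Fin t → (Fin n → Fin K),
            (∏ i, w (p i)) * f ((List.ofFn p).foldl (fun x π => quadStep H c π x) x0))
          - f xstar ≤ (1 - ρ) ^ t * (f x0 - f xstar)) := by
  have hHxstar : H *ᵥ xstar = c := by
    rw [hxstar, mulVec_mulVec, mul_nonsing_inv _ ((isUnit_iff_isUnit_det H).mp hH.isUnit),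
      one_mulVec]
  have hgap : ∀ y, f y - f xstar = 1 / 2 * ((y - xstar) ⬝ᵥ H *ᵥ (y - xstar)) := fun y => by
    rw [hf, hf, quadratic_sub_eq_of_mulVec_eq hH.isHermitian hHxstar]
  have hstep : ∀ x, ∑ π, w π * (f (quadStep H c π x) - f xstar) ≤ (1 - ρ) * (f x - f xstar) := by
    intro x
    simp only [hgap, mul_left_comm (w _), ← Finset.mul_sum]
    linarith [hρ ▸ sum_mul_dotProduct_quadStep_sub_le hH hHxstar hw hwsum x]
  refine ⟨fun x => (sum_mul_sub_of_sum_eq_one hwsum _ _).trans_le (hstep x), fun t x₀ => ?_⟩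
  have hwt : ∑ p : Fin t → (Fin n → Fin K), ∏ i, w (p i) = 1 := by
    rw [← Fintype.sum_pow, hwsum, one_pow]
  rw [sum_mul_sub_of_sum_eq_one hwt]
  refine sum_prod_mul_foldl_le_pow (T := quadStep H c) (h := fun y => f y - f xstar) hw
    (fun y => ?_) hstep t x₀
  rw [hgap]
  exact mul_nonneg (by norm_num) (hH.posSemidef.dotProduct_mulVec_self_nonneg _)

theorem stmt3 {n K : ℕ} (hK : 1 ≤ K) (H : Matrix (Fin n) (Fin n) ℝ) (hH : H.PosDef)
    (c : Fin n → ℝ) (f : (Fin n → ℝ) → ℝ)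
    (hf : ∀ y, f y = 1 / 2 * (y ⬝ᵥ (H *ᵥ y)) - c ⬝ᵥ y)
    (xstar : Fin n → ℝ) (hxstar : xstar = H⁻¹ *ᵥ c)
    -- the distribution of the random partition, as a weight function
    (w : (Fin n → Fin K) → ℝ) (hw : ∀ π, 0 ≤ w π) (hwsum : ∑ π, w π = 1)
    -- the induced block-diagonal matrix is invertible almost surely
    (hinv : ∀ π, 0 < w π → IsUnit (maskMat H π).det)
    (ρ : ℝ)
    (hρ : ρ = (K : ℝ)⁻¹ * lambdaMin ((∑ π, w π • (maskMat H π)⁻¹) * H)) :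
    (∀ x : Fin n → ℝ,
        (∑ π, w π * f (quadStep H c π x)) - f xstar ≤ (1 - ρ) * (f x - f xstar)) ∧
    (∀ (t : ℕ) (x0 : Fin n → ℝ),
        (∑ p : Fin t → (Fin n → Fin K),
            (∏ i, w (p i)) * f ((List.ofFn p).foldl (fun x π => quadStep H c π x) x0))
          - f xstar ≤ (1 - ρ) ^ t * (f x0 - f xstar)) :=
  stmt3_general H hH c f hf xstar hxstar w hw hwsum ρ hρ
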